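/- arXiv:1711.05227 — 2 statements merged into one kernel-verified Lean document; each statement's English description precedes it below -/
import Mathlib

section
/- Homomorphisms preserve least fixpoints of constant-free programs: if P is a logic program containing no constants and η is a homomorphism from base instance B to base instance B', then for every i, η(Iᵢ) ⊆ I'ᵢ, where Iᵢ and I'ᵢ are the stages of the fixpoint computation of P on B and B' respectively; hence η(fix(P,B)) ⊆ fix(P,B'), where η is extended to ground terms by applying it to the constants occurring in them. -/
/-- Ground terms over constants `C` and function symbols `F`. -/
inductive GTerm (C F : Type) where
  | const : C → GTerm C F
  | func : F → List (GTerm C F) → GTerm C F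

/-- Terms over variables `V`, constants `C`, and function symbols `F`. -/
inductive Term (V C F : Type) where
  | var : V → Term V C F
  | const : C → Term V C F
  | func : F → List (Term V C F) → Term V C F

def Term.subst {V C F : Type} (σ : V → GTerm C F) : Term V C F → GTerm C F
  | .var v => σ v
  | .const c => .const c
  | .func f ts => .func f (ts.attach.map fun t => t.1.subst σ)
  decreasing_by
    have := List.sizeOf_lt_of_mem t.2
    simp_wf
    omega


def GTerm.mapConst {C F : Type} (η : C → C) : GTerm C F → GTerm C F
  | .const c => .const (η c)
  | .func f ts => .func f (ts.attach.map fun t => t.1.mapConst η)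
  decreasing_by
    have := List.sizeOf_lt_of_mem t.2
    simp_wf
    omega


structure FAtom (P V C F : Type) where
  pred : P
  args : List (Term V C F)

structure FFact (P C F : Type) where
  pred : P
  args : List (GTerm C F)

structure FRule (P V C F : Type) where
  head : FAtom P V C F
  body : List (FAtom P V C F)

def FAtom.subst {P V C F : Type} (σ : V → GTerm C F) (A : FAtom P V C F) : FFact P C F :=
  ⟨A.pred, A.args.map (Term.subst σ)⟩

def FTP {P V C F : Type} (Prog : Set (FRule P V C F)) (I : Set (FFact P C F)) :
    Set (FFact P C F) :=
  I ∪ {G | ∃ r ∈ Prog, ∃ σ : V → GTerm C F, (∀ A ∈ r.body, A.subst σ ∈ I) ∧ G = r.head.subst σ}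

def fstages {P V C F : Type} (Prog : Set (FRule P V C F)) (B : Set (FFact P C F)) :
    ℕ → Set (FFact P C F)
  | 0 => B
  | n + 1 => FTP Prog (fstages Prog B n)

def flfix {P V C F : Type} (Prog : Set (FRule P V C F)) (B : Set (FFact P C F)) :
    Set (FFact P C F) :=
  ⋃ n, fstages Prog B n

inductive Term.HasConst {V C F : Type} : Term V C F → Prop
  | const (c : C) : HasConst (.const c)
  | func {f : F} {ts : List (Term V C F)} {t : Term V C F} :
      t ∈ ts → HasConst t → HasConst (.func f ts)

def Term.FuncFree {V C F : Type} : Term V C F → Prop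
  | .func _ _ => False
  | _ => True

inductive VarOccurs {V C F : Type} (v : V) : Term V C F → Prop
  | var : VarOccurs v (.var v)
  | func {f : F} {ts : List (Term V C F)} {t : Term V C F} :
      t ∈ ts → VarOccurs v t → VarOccurs v (.func f ts)

def GTerm.depth {C F : Type} : GTerm C F → ℕ
  | .const _ => 0
  | .func _ ts => (ts.attach.map fun t => t.1.depth).foldr max 0 + 1
  decreasing_by
    have := List.sizeOf_lt_of_mem t.2
    simp_wf
    omega


def FFact.depth {P C F : Type} (G : FFact P C F) : ℕ :=
  (G.args.map GTerm.depth).foldr max 0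

inductive Subterm {C F : Type} : GTerm C F → GTerm C F → Prop
  | refl (t : GTerm C F) : Subterm t t
  | func {s t : GTerm C F} {f : F} {ts : List (GTerm C F)} :
      t ∈ ts → Subterm s t → Subterm s (.func f ts)

/-- Apply a map on constants to a fact. -/
def FFact.mapConst {P C F : Type} (η : C → C) (G : FFact P C F) : FFact P C F :=
  ⟨G.pred, G.args.map (GTerm.mapConst η)⟩

/-! A constant-free rule commutes with the constant map `η`: applying `η` to a ground instance of
the rule under `σ` gives its ground instance under `η ∘ σ`. So every rule firing at stage `i` on `B`
is mirrored by a firing at stage `i` on `B'`, and induction on `i` gives the claim. -/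

def FAtom.ConstFree {P V C F : Type} (A : FAtom P V C F) : Prop :=
  ∀ t ∈ A.args, ¬ t.HasConst

theorem Term.mapConst_subst {V C F : Type} (η : C → C) (σ : V → GTerm C F) :
    ∀ t : Term V C F, ¬ t.HasConst →
      (t.subst σ).mapConst η = t.subst (fun v => (σ v).mapConst η) := by
  intro t
  induction t using Term.subst.induct with
  | case1 v => intro _; simp [Term.subst]
  | case2 c => intro h; exact absurd (.const c) h
  | case3 f ts ih =>
    intro h
    simp only [Term.subst, GTerm.mapConst, List.attach_map_val, List.map_map]
    congr 1
    exact List.map_congr_left fun t ht => ih ⟨t, ht⟩ fun hc => h (.func ht hc)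

theorem FAtom.mapConst_subst {P V C F : Type} (η : C → C) (σ : V → GTerm C F)
    {A : FAtom P V C F} (hA : A.ConstFree) :
    (A.subst σ).mapConst η = A.subst (fun v => (σ v).mapConst η) := by
  simp only [FAtom.subst, FFact.mapConst, List.map_map]
  congr 1
  exact List.map_congr_left fun t ht => Term.mapConst_subst η σ t (hA t ht)

section ConstFreeProgram

variable {P V C F : Type} {Prog : Set (FRule P V C F)} (η : C → C)

theorem FTP_mapsTo_mapConst
    (hProg : ∀ r ∈ Prog, ∀ A, (A = r.head ∨ A ∈ r.body) → A.ConstFree)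
    {I I' : Set (FFact P C F)} (hI : Set.MapsTo (FFact.mapConst η) I I') :
    Set.MapsTo (FFact.mapConst η) (FTP Prog I) (FTP Prog I') := by
  rintro G (hG | ⟨r, hr, σ, hbody, rfl⟩)
  · exact Or.inl (hI hG)
  · refine Or.inr ⟨r, hr, fun v => (σ v).mapConst η, fun A hA => ?_, ?_⟩
    · rw [← FAtom.mapConst_subst η σ (hProg r hr A (Or.inr hA))]
      exact hI (hbody A hA)
    · exact FAtom.mapConst_subst η σ (hProg r hr r.head (Or.inl rfl))

theorem fstages_mapsTo_mapConst
    (hProg : ∀ r ∈ Prog, ∀ A, (A = r.head ∨ A ∈ r.body) → A.ConstFree)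
    {B B' : Set (FFact P C F)} (hB : Set.MapsTo (FFact.mapConst η) B B') (i : ℕ) :
    Set.MapsTo (FFact.mapConst η) (fstages Prog B i) (fstages Prog B' i) := by
  induction i with
  | zero => exact hB
  | succ i ih => exact FTP_mapsTo_mapConst η hProg ih

end ConstFreeProgram

/-- if the program `Prog` contains no constants and `η` is a homomorphism
from base instance `B` to base instance `B'` (extended homomorphically to ground terms),
then for every stage `i`, `η(Iᵢ) ⊆ I'ᵢ`; hence `η(fix(Prog,B)) ⊆ fix(Prog,B')`. -/
theorem hom_preserves_lfix_of_constFree {P V C F : Type}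
    (Prog : Set (FRule P V C F)) (B B' : Set (FFact P C F)) (η : C → C)
    (hconstFree : ∀ r ∈ Prog, ∀ A, (A = r.head ∨ A ∈ r.body) → ∀ t ∈ A.args, ¬ t.HasConst)
    (hhom : ∀ G ∈ B, G.mapConst η ∈ B') :
    (∀ i : ℕ, ∀ G ∈ fstages Prog B i, G.mapConst η ∈ fstages Prog B' i) ∧
    (∀ G ∈ flfix Prog B, G.mapConst η ∈ flfix Prog B') := by
  have hstages := fstages_mapsTo_mapConst η hconstFree hhom
  exact ⟨fun i _ hG => hstages i hG, Set.mapsTo_iUnion_iUnion hstages⟩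
end

section
/- The function-symbol elimination transformation defun preserves derivations: let r be a rule whose body contains an atom A with a subterm f(s̄) not nested under another function symbol, and let r' be obtained by replacing that occurrence of f(s̄) in A by a fresh variable z and adding the body atom F_f(s̄, z), where F_f is a fresh predicate; moreover add the rule r'' = (F_f(s̄, f(s̄)) ← body(r)). Then for every instance I and substitution σ with σ(body(r)) ⊆ I: the extension σ' of σ with σ'(z) = σ(f(s̄)) satisfies σ'(body(r')) ⊆ T_{r''}(I), and σ'(head(r')) = σ(head(r)). -/
/-! Since `z` is fresh, `σ' = σ[z ↦ σ(f(s̄))]` agrees with `σ` on every atom of `r`. Hence the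
old body atoms of `r'` are facts of `I`, the atom `A[z/f(s̄)]` instantiates to `σ(A)`, and the new
atom `F_f(s̄, z)` instantiates to the fact `σ(F_f(s̄, f(s̄)))` that `r''` derives from `σ(body r)`. -/

theorem Term.subst_update_of_not_varOccurs {V C F : Type} [DecidableEq V] (σ : V → GTerm C F)
    {z : V} (g : GTerm C F) : ∀ t : Term V C F, ¬ VarOccurs z t →
      t.subst (Function.update σ z g) = t.subst σ
  | .var v, h => by
      have hv : v ≠ z := by rintro rfl; exact h .var
      simp only [Term.subst, Function.update_of_ne hv]
  | .const c, _ => by simp only [Term.subst]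
  | .func f ts, h => by
      simp only [Term.subst]
      congr 1
      refine List.map_congr_left fun t _ => ?_
      exact Term.subst_update_of_not_varOccurs σ g t.1 fun hz => h (.func t.2 hz)
  decreasing_by
    have := List.sizeOf_lt_of_mem t.2
    simp_wf
    omega

theorem FAtom.subst_update_of_not_varOccurs {P V C F : Type} [DecidableEq V]
    (σ : V → GTerm C F) {z : V} (g : GTerm C F) {B : FAtom P V C F}
    (h : ∀ t ∈ B.args, ¬ VarOccurs z t) :
    B.subst (Function.update σ z g) = B.subst σ := by
  unfold FAtom.subst
  congr 1
  exact List.map_congr_left fun t ht => Term.subst_update_of_not_varOccurs σ g t (h t ht)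

theorem FAtom.subst_set_var {P V C F : Type} {σ : V → GTerm C F} {A : FAtom P V C F} {j : ℕ}
    {t : Term V C F} {z : V} (hj : A.args[j]? = some t) (hz : σ z = t.subst σ) :
    FAtom.subst σ ⟨A.pred, A.args.set j (.var z)⟩ = A.subst σ := by
  obtain ⟨hlt, rfl⟩ := List.getElem?_eq_some_iff.mp hj
  unfold FAtom.subst
  congr 1
  rw [List.map_set, Term.subst, hz]
  have := List.set_getElem_self (as := A.args.map (Term.subst σ)) (by simpa using hlt)
  rwa [List.getElem_map] at this

theorem mem_FTP_of_mem {P V C F : Type} {Prog : Set (FRule P V C F)} {I : Set (FFact P C F)}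
    {G : FFact P C F} (hG : G ∈ I) : G ∈ FTP Prog I :=
  Or.inl hG

theorem head_subst_mem_FTP {P V C F : Type} {Prog : Set (FRule P V C F)}
    {I : Set (FFact P C F)} {r : FRule P V C F} (hr : r ∈ Prog) (σ : V → GTerm C F)
    (hσ : ∀ A ∈ r.body, A.subst σ ∈ I) : r.head.subst σ ∈ FTP Prog I :=
  Or.inr ⟨r, hr, σ, hσ, rfl⟩

theorem defun_preserves_derivations_general {P V C F : Type} [DecidableEq V]
    (r : FRule P V C F) (A : FAtom P V C F) (L₁ L₂ : List (FAtom P V C F))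
    (f : F) (ss : List (Term V C F)) (j : ℕ) (z : V) (Ff : P)
    (hbody : r.body = L₁ ++ A :: L₂)
    (hocc : A.args[j]? = some (Term.func f ss))
    (hzfresh : ∀ B, (B = r.head ∨ B ∈ r.body) → ∀ t ∈ B.args, ¬ VarOccurs z t)
    (r' r'' : FRule P V C F)
    (hr' : r' = ⟨r.head,
      (⟨Ff, ss ++ [Term.var z]⟩ : FAtom P V C F) ::
        (L₁ ++ (⟨A.pred, A.args.set j (Term.var z)⟩ : FAtom P V C F) :: L₂)⟩)
    (hr'' : r'' = ⟨(⟨Ff, ss ++ [Term.func f ss]⟩ : FAtom P V C F), r.body⟩)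
    (I : Set (FFact P C F))
    (σ : V → GTerm C F) (hσ : ∀ B ∈ r.body, B.subst σ ∈ I) :
    (∀ B ∈ r'.body,
        B.subst (Function.update σ z (Term.subst σ (Term.func f ss))) ∈ FTP {r''} I) ∧
    r'.head.subst (Function.update σ z (Term.subst σ (Term.func f ss))) =
      r.head.subst σ := by
  subst hr' hr''
  set σ' := Function.update σ z (Term.subst σ (Term.func f ss))
  have hA : A ∈ r.body := by simp [hbody]
  have hbody_eq : ∀ B ∈ r.body, B.subst σ' = B.subst σ := fun B hB =>
    FAtom.subst_update_of_not_varOccurs σ _ (hzfresh B (.inr hB))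
  have hfss : ¬ VarOccurs z (.func f ss) := hzfresh A (.inr hA) _ (List.mem_of_getElem? hocc)
  have hFf_atom :
      FAtom.subst σ' ⟨Ff, ss ++ [.var z]⟩ = FAtom.subst σ ⟨Ff, ss ++ [.func f ss]⟩ := by
    have hss : ∀ t ∈ ss, ¬ VarOccurs z t := fun t ht hz => hfss (.func ht hz)
    simp only [FAtom.subst, List.map_append, List.map_cons, List.map_nil, Term.subst,
      σ', Function.update_self]
    rw [List.map_congr_left fun t ht => Term.subst_update_of_not_varOccurs σ _ t (hss t ht)]
  have hA_atom : FAtom.subst σ' ⟨A.pred, A.args.set j (.var z)⟩ = A.subst σ := by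
    have hz : σ' z = (Term.func f ss).subst σ' :=
      (Function.update_self z _ σ).trans (Term.subst_update_of_not_varOccurs σ _ _ hfss).symm
    rw [FAtom.subst_set_var hocc hz, hbody_eq A hA]
  have hbody_mem : ∀ B ∈ r.body, B.subst σ' ∈ FTP {⟨⟨Ff, ss ++ [.func f ss]⟩, r.body⟩} I :=
    fun B hB => mem_FTP_of_mem (hbody_eq B hB ▸ hσ B hB)
  refine ⟨fun B hB => ?_, FAtom.subst_update_of_not_varOccurs σ _ (hzfresh r.head (.inl rfl))⟩
  simp only [List.mem_cons, List.mem_append] at hB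
  rcases hB with rfl | hB₁ | rfl | hB₂
  · exact hFf_atom ▸ head_subst_mem_FTP (Set.mem_singleton _) σ hσ
  · exact hbody_mem B (by simp [hbody, hB₁])
  · exact mem_FTP_of_mem (hA_atom ▸ hσ A hA)
  · exact hbody_mem B (by simp [hbody, hB₂])

/-- the function-symbol elimination transformation `defun` preserves
derivations.  The body atom `A` of `r` has the term `f(s̄)` at (top-level) position `j`;
`r'` replaces that occurrence by the fresh variable `z` and adds the body atom
`F_f(s̄, z)` for the fresh predicate `Ff`; `r''` derives `F_f(s̄, f(s̄))` from `body r`.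
Then for `σ` satisfying `body r` in `I`, the extension `σ'` of `σ` mapping `z` to
`σ(f(s̄))` satisfies `body r'` in `T_{r''}(I)`, and gives the same head instance. -/
theorem defun_preserves_derivations {P V C F : Type} [DecidableEq V]
    (r : FRule P V C F) (A : FAtom P V C F) (L₁ L₂ : List (FAtom P V C F))
    (f : F) (ss : List (Term V C F)) (j : ℕ) (z : V) (Ff : P)
    (hbody : r.body = L₁ ++ A :: L₂)
    (hocc : A.args[j]? = some (Term.func f ss))
    (hzfresh : ∀ B, (B = r.head ∨ B ∈ r.body) → ∀ t ∈ B.args, ¬ VarOccurs z t)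
    (hFffresh : ∀ B, (B = r.head ∨ B ∈ r.body) → B.pred ≠ Ff)
    (r' r'' : FRule P V C F)
    (hr' : r' = ⟨r.head,
      (⟨Ff, ss ++ [Term.var z]⟩ : FAtom P V C F) ::
        (L₁ ++ (⟨A.pred, A.args.set j (Term.var z)⟩ : FAtom P V C F) :: L₂)⟩)
    (hr'' : r'' = ⟨(⟨Ff, ss ++ [Term.func f ss]⟩ : FAtom P V C F), r.body⟩)
    (I : Set (FFact P C F)) (hIFf : ∀ G ∈ I, G.pred ≠ Ff)
    (σ : V → GTerm C F) (hσ : ∀ B ∈ r.body, B.subst σ ∈ I) :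
    (∀ B ∈ r'.body,
        B.subst (Function.update σ z (Term.subst σ (Term.func f ss))) ∈ FTP {r''} I) ∧
    r'.head.subst (Function.update σ z (Term.subst σ (Term.func f ss))) =
      r.head.subst σ :=
  defun_preserves_derivations_general r A L₁ L₂ f ss j z Ff hbody hocc hzfresh r' r'' hr' hr'' I σ
    hσ
end
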